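/- arXiv:1908.06664 — 9 statements merged into one kernel-verified Lean document; each statement's English description precedes it below -/
import Mathlib

section
/- Let F be an instance of k-SAT with variable vertices v_1,…,v_n and clause vertices c_1,…,c_m in the bipartite incidence graph B(F). If B(F) has no matching covering all variable vertices, then there exists a nonempty set U of variables with |N(U)| < |U| such that the formula F′ obtained by deleting the clauses N(U) and the variables U is satisfiable if and only if F is satisfiable. -/
variable {V : Type*}

/-- Reachability inside a vertex subset `S` of the digraph with arc relation `A`. -/
def ReachIn (A : V → V → Prop) (S : Set V) : V → V → Prop :=
  Relation.ReflTransGen (fun u v => u ∈ S ∧ v ∈ S ∧ A u v)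

/-- The sub-digraph induced on `S` is strongly connected. -/
def StrongIn (A : V → V → Prop) (S : Set V) : Prop :=
  ∀ u ∈ S, ∀ v ∈ S, ReachIn A S u v

/-- `M` is a strongly connected component of the sub-digraph induced on `S`. -/
def IsSCCIn (A : V → V → Prop) (S M : Set V) : Prop :=
  ∃ v ∈ S, M = {u | u ∈ S ∧ ReachIn A S u v ∧ ReachIn A S v u}

/-- There is an arc from (some vertex of) `M` to (some vertex of) `N`. -/
def HasArc (A : V → V → Prop) (M N : Set V) : Prop :=
  ∃ u ∈ M, ∃ w ∈ N, A u w

/-- `S` is a safe set of the sub-digraph of `A` induced on `H`. -/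
def SafeSetIn (A : V → V → Prop) (H S : Set V) : Prop :=
  S.Nonempty ∧ S ⊆ H ∧
    (∀ M, IsSCCIn A (H \ S) M → ∃ N, IsSCCIn A S N ∧ HasArc A M N) ∧
    (∀ M N, IsSCCIn A (H \ S) M → IsSCCIn A S N → HasArc A M N → M.ncard ≤ N.ncard)

/-- `S` is a safe set of the digraph with arc relation `A`. -/
def SafeSet (A : V → V → Prop) (S : Set V) : Prop :=
  SafeSetIn A Set.univ S

/-- `S` is a strong safe set: a safe set inducing a strongly connected sub-digraph. -/
def StrongSafeSet (A : V → V → Prop) (S : Set V) : Prop :=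
  SafeSet A S ∧ StrongIn A S

/-- A digraph is `k`-strong if it has at least `k+1` vertices and deleting any
fewer than `k` vertices leaves a strongly connected digraph. -/
def KStrong [Fintype V] (A : V → V → Prop) (k : ℕ) : Prop :=
  k + 1 ≤ Fintype.card V ∧ ∀ X : Set V, X.ncard < k → StrongIn A Xᶜ

/-- An oriented graph: no loops and no 2-cycles. -/
def Oriented (A : V → V → Prop) : Prop :=
  ∀ u v, A u v → ¬ A v u

/-- A tournament: no loops, and exactly one arc between any two distinct vertices. -/
def IsTournament (A : V → V → Prop) : Prop :=
  (∀ v, ¬ A v v) ∧ ∀ u v : V, u ≠ v → (A u v ↔ ¬ A v u)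

/-- An acyclic digraph: no arc lies on a directed cycle. -/
def AcyclicDigraph (A : V → V → Prop) : Prop :=
  ∀ u v, A u v → ¬ ReachIn A Set.univ v u

/-- `S` is in-dominating: every vertex outside `S` has an out-neighbour in `S`. -/
def InDominating (A : V → V → Prop) (S : Set V) : Prop :=
  ∀ v, v ∉ S → ∃ w ∈ S, A v w

/-- An independent set of a digraph: no arc between any two of its vertices. -/
def IndepSet (A : V → V → Prop) (I : Set V) : Prop :=
  ∀ u ∈ I, ∀ v ∈ I, u ≠ v → ¬ A u v

noncomputable def outDeg (A : V → V → Prop) (v : V) : ℕ := {w | A v w}.ncard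
noncomputable def inDeg (A : V → V → Prop) (v : V) : ℕ := {w | A w v}.ncard

/-- The safe number: minimum cardinality of a safe set. -/
noncomputable def safeNum (A : V → V → Prop) : ℕ :=
  sInf {n | ∃ S : Set V, SafeSet A S ∧ S.ncard = n}

/-- The strong safe number: minimum cardinality of a strong safe set. -/
noncomputable def strongSafeNum (A : V → V → Prop) : ℕ :=
  sInf {n | ∃ S : Set V, StrongSafeSet A S ∧ S.ncard = n}

/-- The sub-digraph induced on `S` is acyclic. -/
def AcyclicIn (A : V → V → Prop) (S : Set V) : Prop :=
  ∀ u ∈ S, ∀ v ∈ S, A u v → ¬ ReachIn A S v u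


theorem stmt6 (n m : ℕ) (C : Fin m → Finset (Fin n × Bool))
    (hnm : ¬ ∃ f : Fin n → Fin m, Function.Injective f ∧ ∀ i : Fin n, ∃ b : Bool, (i, b) ∈ C (f i)) :
    ∃ U : Finset (Fin n), U.Nonempty ∧
      ({j : Fin m | ∃ i ∈ U, ∃ b : Bool, (i, b) ∈ C j} : Set (Fin m)).ncard < U.card ∧
      ((∃ φ : Fin n → Bool, ∀ j : Fin m,
          (∃ i ∈ U, ∃ b : Bool, (i, b) ∈ C j) ∨ ∃ l ∈ C j, φ l.1 = l.2) ↔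
        (∃ φ : Fin n → Bool, ∀ j : Fin m, ∃ l ∈ C j, φ l.1 = l.2)) := by
  classical
  set t : Fin n → Finset (Fin m) := fun i => Finset.univ.filter (fun j => ∃ b : Bool, (i, b) ∈ C j) with ht
  have hmem : ∀ i j, j ∈ t i ↔ ∃ b : Bool, (i, b) ∈ C j := by
    intro i j; simp [ht]
  have hfail : ¬ ∀ s : Finset (Fin n), s.card ≤ (s.biUnion t).card := by
    intro h
    obtain ⟨f, hf, hft⟩ := (Finset.all_card_le_biUnion_card_iff_existsInjective' t).mp h
    exact hnm ⟨f, hf, fun i => (hmem i (f i)).mp (hft i)⟩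
  push_neg at hfail
  obtain ⟨U0, hU0⟩ := hfail
  have hne : (Finset.univ.filter
      (fun U : Finset (Fin n) => (U.biUnion t).card < U.card)).Nonempty :=
    ⟨U0, by simp [hU0]⟩
  obtain ⟨U, hUmem, hUmin⟩ := Finset.exists_min_image _ Finset.card hne
  simp only [Finset.mem_filter, Finset.mem_univ, true_and] at hUmem
  have hUmin' : ∀ U' : Finset (Fin n), (U'.biUnion t).card < U'.card → U.card ≤ U'.card := by
    intro U' h'; exact hUmin U' (by simp [h'])
  have hUne : U.Nonempty := by
    rw [Finset.nonempty_iff_ne_empty]; rintro rfl; simp at hUmem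
  have hproper : ∀ U' : Finset (Fin n), U' ⊂ U → U'.card ≤ (U'.biUnion t).card := by
    intro U' h'
    by_contra hc; push_neg at hc
    exact absurd (hUmin' U' hc) (not_le.mpr (Finset.card_lt_card h'))
  refine ⟨U, hUne, ?_, ?_⟩
  · have hset : ({j : Fin m | ∃ i ∈ U, ∃ b : Bool, (i, b) ∈ C j} : Set (Fin m))
        = ↑(U.biUnion t) := by
      ext j
      simp only [Set.mem_setOf_eq, Finset.coe_biUnion, Set.mem_iUnion, Finset.mem_coe]
      constructor
      · rintro ⟨i, hi, hb⟩; exact ⟨i, hi, (hmem i j).mpr hb⟩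
      · rintro ⟨i, hi, hj⟩; exact ⟨i, hi, (hmem i j).mp hj⟩
    rw [hset, Set.ncard_coe_finset]; exact hUmem
  · constructor
    · rintro ⟨φ, hφ⟩
      set T := U.biUnion t with hT
      set t' : ↥T → Finset (Fin n) :=
        fun j => U.filter (fun i => ∃ b : Bool, (i, b) ∈ C j.1) with ht'
      have ht'iff : ∀ (j : ↥T) (i : Fin n), i ∈ t' j ↔ i ∈ U ∧ ∃ b : Bool, (i, b) ∈ C j.1 := by
        intro j i; simp [ht']
      have hall : ∀ s : Finset ↥T, s.card ≤ (s.biUnion t').card := by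
        intro s
        rcases s.eq_empty_or_nonempty with rfl | hs
        · simp
        · set W := s.biUnion t' with hW
          have hWU : W ⊆ U := by
            intro i hi
            obtain ⟨j, _, hj⟩ := Finset.mem_biUnion.mp hi
            exact ((ht'iff j i).mp hj).1
          have hWne : W.Nonempty := by
            obtain ⟨j, hj⟩ := hs
            obtain ⟨i, hiU, hij⟩ := Finset.mem_biUnion.mp j.2
            exact ⟨i, Finset.mem_biUnion.mpr ⟨j, hj, (ht'iff j i).mpr ⟨hiU, (hmem i j.1).mp hij⟩⟩⟩
          have hssub : (U \ W) ⊂ U := by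
            refine Finset.sdiff_ssubset ?_ hWne
            exact fun i hi => hWU hi
          have h1 : (U \ W).card ≤ ((U \ W).biUnion t).card := hproper _ hssub
          have himsub : s.image Subtype.val ⊆ T := by
            intro j hj
            obtain ⟨j', _, rfl⟩ := Finset.mem_image.mp hj
            exact j'.2
          have h2 : ((U \ W).biUnion t) ⊆ T \ s.image Subtype.val := by
            intro j hj
            obtain ⟨i, hiUW, hij⟩ := Finset.mem_biUnion.mp hj
            obtain ⟨hiU, hiW⟩ := Finset.mem_sdiff.mp hiUW
            refine Finset.mem_sdiff.mpr ⟨Finset.mem_biUnion.mpr ⟨i, hiU, hij⟩, ?_⟩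
            intro hjs
            obtain ⟨j', hj's, hj'⟩ := Finset.mem_image.mp hjs
            apply hiW
            refine Finset.mem_biUnion.mpr ⟨j', hj's, (ht'iff j' i).mpr ⟨hiU, ?_⟩⟩
            rw [hj']; exact (hmem i j).mp hij
          have h2' : ((U \ W).biUnion t).card ≤ (T \ s.image Subtype.val).card :=
            Finset.card_le_card h2
          have h3 : (s.image Subtype.val).card = s.card :=
            Finset.card_image_of_injective s Subtype.val_injective
          have h4 : (U \ W).card = U.card - W.card := Finset.card_sdiff_of_subset hWU
          have h5 : (T \ s.image Subtype.val).card = T.card - (s.image Subtype.val).card :=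
            Finset.card_sdiff_of_subset himsub
          have h6 : (s.image Subtype.val).card ≤ T.card := Finset.card_le_card himsub
          have h7 : W.card ≤ U.card := Finset.card_le_card hWU
          have h8 : T.card < U.card := hUmem
          omega
      obtain ⟨g, hg, hgt⟩ := (Finset.all_card_le_biUnion_card_iff_existsInjective' t').mp hall
      have hgU : ∀ j : ↥T, g j ∈ U := fun j => ((ht'iff j (g j)).mp (hgt j)).1
      have hgb : ∀ j : ↥T, ∃ b : Bool, (g j, b) ∈ C j.1 :=
        fun j => ((ht'iff j (g j)).mp (hgt j)).2
      set bfun : ↥T → Bool := fun j => (hgb j).choose with hbfun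
      have hbspec : ∀ j : ↥T, (g j, bfun j) ∈ C j.1 := fun j => (hgb j).choose_spec
      set φ' : Fin n → Bool :=
        fun i => if h : ∃ j : ↥T, g j = i then bfun h.choose else φ i with hφ'
      refine ⟨φ', fun j => ?_⟩
      by_cases hjT : j ∈ T
      · set j' : ↥T := ⟨j, hjT⟩ with hj'
        refine ⟨(g j', bfun j'), hbspec j', ?_⟩
        have hex : ∃ jj : ↥T, g jj = g j' := ⟨j', rfl⟩
        have : hex.choose = j' := hg hex.choose_spec
        simp only [hφ', dif_pos hex]
        rw [this]
      · rcases hφ j with h | ⟨l, hl, hφl⟩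
        · obtain ⟨i, hiU, hb⟩ := h
          exact absurd (Finset.mem_biUnion.mpr ⟨i, hiU, (hmem i j).mpr hb⟩) hjT
        · refine ⟨l, hl, ?_⟩
          have hnr : ¬ ∃ jj : ↥T, g jj = l.1 := by
            rintro ⟨jj, hjj⟩
            exact hjT (Finset.mem_biUnion.mpr ⟨l.1, hjj ▸ hgU jj, (hmem l.1 j).mpr ⟨l.2, hl⟩⟩)
          simp only [hφ', dif_neg hnr]
          exact hφl
    · rintro ⟨φ, hφ⟩
      exact ⟨φ, fun j => Or.inr (hφ j)⟩
end

section
/- A tournament has a safe set of cardinality one if and only if it is transitive. Consequently a tournament T has s(T) = 1 if and only if T is acyclic. -/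
variable {V : Type*}

/-!
A one-vertex safe set `{v}` forces every strong component of `T - v` to be a single vertex with
an arc into `v`. In a tournament this makes `v` a sink and `T - v` acyclic, and since no cycle
passes through a sink, `T` is acyclic. Conversely, a finite acyclic digraph has a sink, which in a
tournament receives an arc from every other vertex; all strong components of an acyclic digraph
are single vertices, so the sink alone is a safe set.
-/

def sccIn (A : V → V → Prop) (S : Set V) (v : V) : Set V :=
  {u | u ∈ S ∧ ReachIn A S u v ∧ ReachIn A S v u}

def IsSink (A : V → V → Prop) (v : V) : Prop :=
  ∀ w, ¬ A v w

section Digraph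

variable {A : V → V → Prop} {S T : Set V} {u v w : V}

theorem ReachIn.mono (hST : S ⊆ T) (h : ReachIn A S u w) : ReachIn A T u w :=
  Relation.ReflTransGen.mono (fun _ _ ⟨ha, hb, hab⟩ => ⟨hST ha, hST hb, hab⟩) _ _ h

theorem ReachIn.eq_of_isSink (hv : IsSink A v) (h : ReachIn A S v w) : w = v := by
  rcases Relation.ReflTransGen.cases_head h with h | ⟨x, ⟨-, -, hvx⟩, -⟩
  · exact h.symm
  · exact absurd hvx (hv x)

theorem ReachIn.diff_singleton_of_isSink (hv : IsSink A v) (h : ReachIn A Set.univ u w)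
    (hw : w ≠ v) : ReachIn A (Set.univ \ {v}) u w := by
  induction h with
  | refl => exact .refl
  | @tail x w _ hxw ih =>
    have hx : x ≠ v := by rintro rfl; exact hv w hxw.2.2
    exact (ih hx).tail ⟨⟨trivial, hx⟩, ⟨trivial, hw⟩, hxw.2.2⟩

theorem mem_sccIn_self (hv : v ∈ S) : v ∈ sccIn A S v :=
  ⟨hv, .refl, .refl⟩

theorem isSCCIn_iff {M : Set V} : IsSCCIn A S M ↔ ∃ v ∈ S, M = sccIn A S v :=
  Iff.rfl

theorem isSCCIn_sccIn (hv : v ∈ S) : IsSCCIn A S (sccIn A S v) :=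
  ⟨v, hv, rfl⟩

theorem sccIn_singleton : sccIn A {v} v = {v} :=
  Set.eq_singleton_iff_unique_mem.2 ⟨mem_sccIn_self rfl, fun _ hu => hu.1⟩

theorem isSCCIn_singleton_iff {N : Set V} : IsSCCIn A {v} N ↔ N = {v} := by
  constructor
  · rintro ⟨w, rfl, rfl⟩
    exact sccIn_singleton
  · rintro rfl
    exact ⟨v, rfl, sccIn_singleton.symm⟩

theorem AcyclicIn.sccIn_eq_singleton (h : AcyclicIn A S) (hv : v ∈ S) : sccIn A S v = {v} := by
  refine Set.eq_singleton_iff_unique_mem.2 ⟨mem_sccIn_self hv, fun u ⟨_, huv, hvu⟩ => ?_⟩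
  rcases Relation.ReflTransGen.cases_head hvu with rfl | ⟨x, ⟨-, hx, hvx⟩, hxu⟩
  · rfl
  · exact absurd (Relation.ReflTransGen.trans hxu huv) (h v hv x hx hvx)

theorem acyclicIn_of_sccIn_eq_singleton (hloop : ∀ v, ¬ A v v)
    (h : ∀ v ∈ S, sccIn A S v = {v}) : AcyclicIn A S := by
  intro u hu w hw huw hwu
  have hwu' : w ∈ sccIn A S u := ⟨hw, hwu, .single ⟨hu, hw, huw⟩⟩
  rw [h u hu, Set.mem_singleton_iff] at hwu'
  exact hloop u (hwu' ▸ huw)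

theorem AcyclicDigraph.acyclicIn (h : AcyclicDigraph A) : AcyclicIn A S :=
  fun u _ w _ huw hwu => h u w huw (hwu.mono (Set.subset_univ S))

theorem acyclicDigraph_iff_acyclicIn_of_isSink (hv : IsSink A v) :
    AcyclicDigraph A ↔ AcyclicIn A (Set.univ \ {v}) := by
  refine ⟨AcyclicDigraph.acyclicIn, fun h u w huw hwu => ?_⟩
  have hu : u ≠ v := by rintro rfl; exact hv w huw
  have hw : w ≠ v := by rintro rfl; exact hu (hwu.eq_of_isSink hv)
  exact h u ⟨trivial, hu⟩ w ⟨trivial, hw⟩ huw (hwu.diff_singleton_of_isSink hv hu)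

theorem AcyclicDigraph.exists_isSink [Finite V] [Nonempty V] (h : AcyclicDigraph A) :
    ∃ v, IsSink A v := by
  have hirrefl : ∀ u, ¬ Relation.TransGen A u u := fun u huu => by
    obtain ⟨w, huw, hwu⟩ := Relation.TransGen.head'_iff.1 huu
    exact h u w huw (Relation.ReflTransGen.mono (fun _ _ hab => ⟨trivial, trivial, hab⟩) _ _ hwu)
  have hwf : WellFounded (flip (Relation.TransGen A)) :=
    @Finite.wellFounded_of_trans_of_irrefl _ _ _ ⟨fun _ _ _ hab hbc => hbc.trans hab⟩ ⟨hirrefl⟩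
  obtain ⟨v, -, hv⟩ := hwf.has_min Set.univ Set.univ_nonempty
  exact ⟨v, fun w hvw => hv w trivial (.single hvw)⟩

theorem IsTournament.isSink_iff (hT : IsTournament A) : IsSink A v ↔ ∀ u ≠ v, A u v := by
  refine ⟨fun hv u hu => (hT.2 u v hu).2 (hv u), fun h w hvw => ?_⟩
  rcases eq_or_ne w v with rfl | hw
  · exact hT.1 w hvw
  · exact (hT.2 w v hw).1 (h w hw) hvw

theorem safeSet_singleton_iff [Finite V] (hloop : ∀ v, ¬ A v v) :
    SafeSet A {v} ↔ (∀ u ≠ v, A u v) ∧ AcyclicIn A (Set.univ \ {v}) := by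
  constructor
  · rintro ⟨-, -, hArc, hCard⟩
    have hscc : ∀ z ∈ Set.univ \ {v}, sccIn A (Set.univ \ {v}) z = {z} ∧ A z v := by
      intro z hz
      obtain ⟨N, hN, harc⟩ := hArc _ (isSCCIn_sccIn hz)
      obtain rfl := isSCCIn_singleton_iff.1 hN
      have hle := hCard _ _ (isSCCIn_sccIn hz) hN harc
      rw [Set.ncard_singleton, Set.ncard_le_one_iff] at hle
      have hM : sccIn A (Set.univ \ {v}) z = {z} :=
        Set.eq_singleton_iff_unique_mem.2
          ⟨mem_sccIn_self hz, fun _ hu => hle hu (mem_sccIn_self hz)⟩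
      obtain ⟨a, ha, b, rfl, hab⟩ := harc
      rw [hM, Set.mem_singleton_iff] at ha
      exact ⟨hM, ha ▸ hab⟩
    exact ⟨fun u hu => (hscc u ⟨trivial, hu⟩).2,
      acyclicIn_of_sccIn_eq_singleton hloop fun z hz => (hscc z hz).1⟩
  · rintro ⟨hin, hac⟩
    refine ⟨Set.singleton_nonempty v, Set.subset_univ _, ?_, ?_⟩
    · intro M hM
      obtain ⟨z, hz, rfl⟩ := isSCCIn_iff.1 hM
      rw [hac.sccIn_eq_singleton hz]
      exact ⟨{v}, isSCCIn_singleton_iff.2 rfl, z, rfl, v, rfl, hin z hz.2⟩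
    · intro M N hM hN _
      obtain ⟨z, hz, rfl⟩ := isSCCIn_iff.1 hM
      rw [hac.sccIn_eq_singleton hz, isSCCIn_singleton_iff.1 hN, Set.ncard_singleton,
        Set.ncard_singleton]

theorem safeNum_eq_one_iff [Finite V] : safeNum A = 1 ↔ ∃ S, SafeSet A S ∧ S.ncard = 1 := by
  constructor
  · intro h
    have hmem := Nat.sInf_mem (Nat.nonempty_of_pos_sInf (h ▸ Nat.one_pos))
    rwa [← safeNum, h] at hmem
  · intro h1
    have hpos : ∀ n ∈ {n | ∃ S : Set V, SafeSet A S ∧ S.ncard = n}, 1 ≤ n := by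
      rintro _ ⟨S, hS, rfl⟩
      exact (Set.ncard_pos S.toFinite).2 hS.1
    exact le_antisymm (Nat.sInf_le h1) (le_csInf ⟨1, h1⟩ hpos)

end Digraph

theorem stmt7 [Fintype V] [Nonempty V] (A : V → V → Prop) (hT : IsTournament A) :
    ((∃ S : Set V, SafeSet A S ∧ S.ncard = 1) ↔ AcyclicDigraph A) ∧
      (safeNum A = 1 ↔ AcyclicDigraph A) := by
  have hsingleton : (∃ S : Set V, SafeSet A S ∧ S.ncard = 1) ↔ AcyclicDigraph A := by
    simp_rw [Set.ncard_eq_one]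
    constructor
    · rintro ⟨_, hS, v, rfl⟩
      rw [safeSet_singleton_iff hT.1, ← hT.isSink_iff] at hS
      exact (acyclicDigraph_iff_acyclicIn_of_isSink hS.1).2 hS.2
    · intro hac
      obtain ⟨v, hv⟩ := hac.exists_isSink
      exact ⟨{v}, (safeSet_singleton_iff hT.1).2 ⟨hT.isSink_iff.1 hv, hac.acyclicIn⟩, v, rfl⟩
  exact ⟨hsingleton, safeNum_eq_one_iff.trans hsingleton⟩
end

section
/- Any safe set of cardinality exactly k in a k-strong tournament T on more than 2k vertices is a separator of T, i.e., its removal disconnects T (leaves a non-strong digraph). -/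
variable {V : Type*}

theorem stmt9 [Fintype V] (A : V → V → Prop) (k : ℕ)
    (hT : IsTournament A) (hk : KStrong A k) (hn : 2 * k < Fintype.card V)
    (S : Set V) (hS : SafeSet A S) (hcard : S.ncard = k) :
    S ≠ Set.univ ∧ ¬ StrongIn A Sᶜ := by
  have hkV : k < Fintype.card V := lt_of_le_of_lt (Nat.le_mul_of_pos_left k two_pos) hn
  have hccard : (Sᶜ).ncard = Fintype.card V - k := by
    have := Set.ncard_add_ncard_compl S
    rw [hcard, Nat.card_eq_fintype_card] at this
    omega
  constructor
  · intro h
    rw [h, Set.ncard_univ, Nat.card_eq_fintype_card] at hcard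
    omega
  · intro hstr
    obtain ⟨hne, hsub, h3, h4⟩ := hS
    have hd : Set.univ \ S = Sᶜ := (Set.compl_eq_univ_diff S).symm
    have hcne : (Sᶜ).Nonempty := by
      rw [← Set.ncard_pos]
      omega
    obtain ⟨v, hv⟩ := hcne
    have hscc : IsSCCIn A (Set.univ \ S) Sᶜ := by
      rw [hd]
      refine ⟨v, hv, ?_⟩
      ext u
      simp only [Set.mem_setOf_eq]
      exact ⟨fun hu => ⟨hu, hstr u hu v hv, hstr v hv u hu⟩, fun h => h.1⟩
    obtain ⟨N, hN, harc⟩ := h3 _ hscc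
    have hle := h4 _ _ hscc hN harc
    have hNsub : N ⊆ S := by
      obtain ⟨w, hw, rfl⟩ := hN
      exact fun u hu => hu.1
    have hNle : N.ncard ≤ k := hcard ▸ Set.ncard_le_ncard hNsub (Set.toFinite S)
    omega
end

section
/- No 2-strong tournament has a safe set of cardinality 2; hence s(T) ≥ 3 for every 2-strong tournament T. -/
variable {V : Type*}

/-- In a tournament, reachability within a set of at most two elements implies
equality or a direct arc. -/
lemma reach_pair {A : V → V → Prop} (hT : IsTournament A) {a b x y : V}
    (h : ReachIn A {a, b} x y) : x = y ∨ (x ∈ ({a, b} : Set V) ∧ A x y) := by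
  induction h with
  | refl => exact Or.inl rfl
  | @tail m y h₁ h₂ ih =>
    obtain ⟨hm, hy, hA⟩ := h₂
    rcases ih with rfl | ⟨hx, hxm⟩
    · exact Or.inr ⟨hm, hA⟩
    · have hxne : x ≠ m := fun he => hT.1 m (he ▸ hxm)
      have hyne : m ≠ y := fun he => hT.1 m (he ▸ hA)
      -- x, m, y ∈ {a,b}, x ≠ m, y ≠ m, so x = y
      have : x = y := by
        rcases hm with rfl | rfl <;> rcases hx with rfl | rfl <;>
          rcases hy with rfl | rfl <;> first | rfl | (exact absurd rfl hxne) |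
          (exact absurd rfl hyne)
      exact Or.inl this

/-- Every strong component of a tournament restricted to a set of ≤ 2 elements
is a singleton. -/
lemma scc_pair {A : V → V → Prop} (hT : IsTournament A) {a b : V} {N : Set V}
    (hN : IsSCCIn A {a, b} N) : ∃ n ∈ ({a, b} : Set V), N = {n} := by
  obtain ⟨n, hn, rfl⟩ := hN
  refine ⟨n, hn, ?_⟩
  ext w
  simp only [Set.mem_setOf_eq, Set.mem_singleton_iff]
  constructor
  · rintro ⟨hwS, h1, h2⟩
    by_contra hne
    rcases reach_pair hT h1 with rfl | ⟨_, hwn⟩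
    · exact hne rfl
    rcases reach_pair hT h2 with rfl | ⟨_, hnw⟩
    · exact hne rfl
    exact ((hT.2 w n hne).mp hwn) hnw
  · rintro rfl
    exact ⟨hn, Relation.ReflTransGen.refl, Relation.ReflTransGen.refl⟩

lemma safe_ncard_ge {A : V → V → Prop} [Fintype V]
    (hT : IsTournament A) (h2 : KStrong A 2) {S : Set V} (hS : SafeSet A S) :
    3 ≤ S.ncard := by
  by_contra hlt
  push_neg at hlt
  obtain ⟨hne, _, hsafe1, hsafe2⟩ := hS
  have hcard : 3 ≤ Fintype.card V := h2.1
  -- S = {a, b} with possibly a = b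
  have hpos : 0 < S.ncard := (Set.ncard_pos (Set.toFinite S)).mpr hne
  obtain ⟨a, b, hab⟩ : ∃ a b : V, S = {a, b} := by
    interval_cases h : S.ncard
    · obtain ⟨a, ha⟩ := Set.ncard_eq_one.mp h
      exact ⟨a, a, by simp [ha]⟩
    · obtain ⟨a, b, _, hab⟩ := Set.ncard_eq_two.mp h
      exact ⟨a, b, hab⟩
  set C : Set V := Set.univ \ S with hCdef
  have hCmem : ∀ v, v ∈ C ↔ v ∉ S := by intro v; simp [hCdef]
  -- Every strong component of T - S is a singleton, with an arc into S
  have hsing : ∀ v ∈ C,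
      (∀ u, u ∈ C → ReachIn A C u v → ReachIn A C v u → u = v) ∧
        ∃ n ∈ S, A v n := by
    intro v hv
    set M : Set V := {u | u ∈ C ∧ ReachIn A C u v ∧ ReachIn A C v u} with hMdef
    have hM : IsSCCIn A C M := ⟨v, hv, rfl⟩
    obtain ⟨N, hN, harc⟩ := hsafe1 M hM
    obtain ⟨n, hnS, rfl⟩ := scc_pair hT (hab ▸ hN)
    have hnS' : n ∈ S := hab ▸ hnS
    have hMle : M.ncard ≤ 1 := by
      have := hsafe2 M {n} hM (hab ▸ hN) harc
      simpa using this
    have hvM : v ∈ M := ⟨hv, Relation.ReflTransGen.refl, Relation.ReflTransGen.refl⟩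
    have hMeq : M = {v} := by
      have h1 : M.ncard = 1 :=
        le_antisymm hMle ((Set.ncard_pos (Set.toFinite M)).mpr ⟨v, hvM⟩)
      obtain ⟨x, hx⟩ := Set.ncard_eq_one.mp h1
      rw [hx] at hvM ⊢
      rw [Set.mem_singleton_iff.mp hvM]
    constructor
    · intro u hu h1 h2
      have : u ∈ M := ⟨hu, h1, h2⟩
      rw [hMeq] at this
      exact this
    · obtain ⟨u, huM, w, hw, hA⟩ := harc
      rw [hMeq, Set.mem_singleton_iff] at huM
      rw [Set.mem_singleton_iff] at hw
      rw [huM, hw] at hA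
      exact ⟨n, hnS', hA⟩
  -- Every vertex of C has an in-neighbour in C
  have hinC : ∀ v ∈ C, ∃ u, u ∈ C ∧ A u v := by
    intro v hv
    by_contra hno
    push_neg at hno
    obtain ⟨_, n, hnS, hvn⟩ := hsing v hv
    set X : Set V := {u | A u v} with hXdef
    have hXsub : X ⊆ ({a, b} : Set V) \ {n} := by
      intro u hu
      have huS : u ∈ S := by
        by_contra huS
        exact hno u ((hCmem u).mpr huS) hu
      refine ⟨hab ▸ huS, ?_⟩
      simp only [Set.mem_singleton_iff]
      rintro rfl
      have hvne : v ≠ u := by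
        rintro rfl; exact ((hCmem v).mp hv) huS
      exact ((hT.2 v u hvne).mp hvn) hu
    have hXle : X.ncard ≤ 1 := by
      have hnab : n ∈ ({a, b} : Set V) := hab ▸ hnS
      have hsub2 : X ⊆ {b} ∨ X ⊆ {a} := by
        rcases hnab with rfl | rfl
        · left; intro x hx
          have := hXsub hx
          simp only [Set.mem_diff, Set.mem_insert_iff, Set.mem_singleton_iff] at this ⊢
          tauto
        · right; intro x hx
          have := hXsub hx
          simp only [Set.mem_diff, Set.mem_insert_iff, Set.mem_singleton_iff] at this ⊢
          tauto
      rcases hsub2 with h | h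
      · exact le_trans (Set.ncard_le_ncard h (Set.toFinite _)) (by simp)
      · exact le_trans (Set.ncard_le_ncard h (Set.toFinite _)) (by simp)
    have hstrong : StrongIn A Xᶜ := h2.2 X (lt_of_le_of_lt hXle (by norm_num))
    have hcompl : 2 ≤ Xᶜ.ncard := by
      have := Set.ncard_add_ncard_compl X
      have hcV : Nat.card V = Fintype.card V := Nat.card_eq_fintype_card
      omega
    obtain ⟨w, hw, hwv⟩ := Set.exists_ne_of_one_lt_ncard (s := Xᶜ) (by omega) v
    have hvX : v ∈ Xᶜ := fun h => hT.1 v h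
    have hreach := hstrong w hw v hvX
    rcases (Relation.ReflTransGen.cases_tail hreach) with heq | ⟨c, _, hcX, _, hA⟩
    · exact hwv heq.symm
    · exact hcX hA
  -- Build an in-walk and find a nontrivial strong component: contradiction
  have hCne : C.Nonempty := by
    rw [hCdef, ← Set.compl_eq_univ_diff]
    rcases Set.eq_empty_or_nonempty Sᶜ with h | h
    · exfalso
      have : S = Set.univ := by
        rw [← Set.compl_empty_iff]; exact h
      rw [this, Set.ncard_univ, Nat.card_eq_fintype_card] at hlt
      omega
    · exact h
  obtain ⟨v0, hv0⟩ := hCne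
  classical
  set g : V → V := fun v => if h : v ∈ C then Classical.choose (hinC v h) else v0 with hgdef
  have hg : ∀ v (h : v ∈ C), g v ∈ C ∧ A (g v) v := by
    intro v h
    have := Classical.choose_spec (hinC v h)
    simp only [hgdef, dif_pos h]
    exact this
  have hit : ∀ n, g^[n] v0 ∈ C := by
    intro n
    induction n with
    | zero => exact hv0
    | succ n ih =>
      rw [Function.iterate_succ_apply']
      exact (hg _ ih).1
  have hreach : ∀ m n : ℕ, m ≤ n → ReachIn A C (g^[n] v0) (g^[m] v0) := by
    intro m n hmn
    induction n, hmn using Nat.le_induction with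
    | base => exact Relation.ReflTransGen.refl
    | succ n hmn ih =>
      refine Relation.ReflTransGen.head ?_ ih
      rw [Function.iterate_succ_apply']
      exact ⟨(hg _ (hit n)).1, hit n, (hg _ (hit n)).2⟩
  obtain ⟨i, j, hij, heq⟩ :=
    Finite.exists_ne_map_eq_of_infinite (fun n : ℕ => g^[n] v0)
  wlog hlt' : i < j generalizing i j
  · exact this j i hij.symm heq.symm (by omega)
  set u := g^[i] v0 with hudef
  have hu : u ∈ C := hit i
  have hgu : g u ∈ C ∧ A (g u) u := hg u hu
  have h1 : ReachIn A C (g u) u := Relation.ReflTransGen.single ⟨hgu.1, hu, hgu.2⟩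
  have h2 : ReachIn A C u (g u) := by
    have : g u = g^[i+1] v0 := (Function.iterate_succ_apply' g i v0).symm
    rw [this, hudef]
    have : g^[i] v0 = g^[j] v0 := heq
    rw [this]
    exact hreach (i + 1) j hlt'
  have heq2 := (hsing u hu).1 (g u) hgu.1 h1 h2
  have hA := hgu.2
  rw [heq2] at hA
  exact hT.1 u hA

theorem stmt11 [Fintype V] (A : V → V → Prop)
    (hT : IsTournament A) (h2 : KStrong A 2) :
    (¬ ∃ S : Set V, SafeSet A S ∧ S.ncard = 2) ∧ 3 ≤ safeNum A := by
  constructor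
  · rintro ⟨S, hS, hc⟩
    have := safe_ncard_ge hT h2 hS
    omega
  · have hV : 3 ≤ Fintype.card V := h2.1
    have huniv : SafeSet A Set.univ := by
      refine ⟨?_, le_refl _, ?_, ?_⟩
      · have : Nonempty V := Fintype.card_pos_iff.mp (by omega)
        exact Set.univ_nonempty
      · rintro M ⟨v, hv, -⟩
        simp at hv
      · rintro M N ⟨v, hv, -⟩
        simp at hv
    have hne : {n | ∃ S : Set V, SafeSet A S ∧ S.ncard = n}.Nonempty :=
      ⟨(Set.univ : Set V).ncard, Set.univ, huniv, rfl⟩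
    obtain ⟨S, hS, hSc⟩ := Nat.sInf_mem hne
    rw [safeNum, ← hSc]
    exact safe_ncard_ge hT h2 hS
end

section
/- For k ≥ 3, the circulant tournament T on vertices v_0,…,v_{2k} with arcs v_i → v_{i+j} (indices mod 2k+1) for j ∈ {1,…,k+1}\{k} is k-strong, and the set S = {v_1,…,v_{k-1}, v_{k+1}} is a strong safe set of T of cardinality k. -/
variable {V : Type*}

/-!
Write `n = 2k + 1`; the steps of the circulant are `1, …, k-1, k+1`, and `S` is the
out-neighbourhood of `0`.

`k`-strong: to reach `u + d` from `u` avoiding a set `X` of fewer than `k` vertices, step to some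
`u + t ∉ X` with `t < k` and recurse. If no such step exists, then `X = {u+1, …, u+k-1}`, so
`u + k, …, u + 2k` all survive and `u → u+k+1 ⇝ u+d` works (for `d = k` through `u + 2k`).

Safe set: `S` is strongly connected through the vertex `1`, and every vertex outside `S` has an
arc into `S`. Since `0` is a sink of `T - S`, a strong component of `T - S` is either `{0}` or
avoids `0`; in both cases it has at most `|T - S| - 1 = k = |S|` vertices.
-/

section Digraph

variable {A : V → V → Prop} {H : Set V}

lemma strongIn_of_hub (c : V) (hc : ∀ u ∈ H, ReachIn A H u c ∧ ReachIn A H c u) :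
    StrongIn A H :=
  fun u hu v hv => (hc u hu).1.trans (hc v hv).2

lemma StrongIn.isSCCIn_iff {N : Set V} (hH : StrongIn A H) (hne : H.Nonempty) :
    IsSCCIn A H N ↔ N = H := by
  have hcomp : ∀ v ∈ H, {u | u ∈ H ∧ ReachIn A H u v ∧ ReachIn A H v u} = H := fun v hv =>
    Set.ext fun u => ⟨fun hu => hu.1, fun hu => ⟨hu, hH u hu v hv, hH v hv u hu⟩⟩
  constructor
  · rintro ⟨v, hv, rfl⟩
    exact hcomp v hv
  · rintro rfl
    obtain ⟨v, hv⟩ := hne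
    exact ⟨v, hv, (hcomp v hv).symm⟩

lemma IsSCCIn.subset {M : Set V} (hM : IsSCCIn A H M) : M ⊆ H := by
  obtain ⟨v, -, rfl⟩ := hM
  exact fun u hu => hu.1

lemma ReachIn.eq_of_sink {u v : V} (hv : ∀ w ∈ H, ¬ A v w) (h : ReachIn A H v u) : u = v := by
  rcases Relation.ReflTransGen.cases_head h with rfl | ⟨w, ⟨-, hw, hvw⟩, -⟩
  · rfl
  · exact absurd hvw (hv w hw)

lemma IsSCCIn.eq_singleton_of_sink {M : Set V} {v : V} (hM : IsSCCIn A H M) (hvM : v ∈ M)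
    (hv : ∀ w ∈ H, ¬ A v w) : M = {v} := by
  obtain ⟨c, -, rfl⟩ := hM
  obtain rfl : c = v := hvM.2.1.eq_of_sink hv
  ext u
  exact ⟨fun hu => hu.2.2.eq_of_sink hv, by rintro rfl; exact hvM⟩

lemma strongSafeSet_of_inDominating {S : Set V} (hne : S.Nonempty) (hS : StrongIn A S)
    (hdom : InDominating A S) (hcard : ∀ M, IsSCCIn A Sᶜ M → M.ncard ≤ S.ncard) :
    StrongSafeSet A S := by
  refine ⟨⟨hne, Set.subset_univ S, fun M hM => ?_, fun M N hM hN _ => ?_⟩, hS⟩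
  · obtain ⟨v, hv, rfl⟩ := hM
    obtain ⟨w, hw, hvw⟩ := hdom v hv.2
    exact ⟨S, (hS.isSCCIn_iff hne).2 rfl, v, ⟨hv, .refl, .refl⟩, w, hw, hvw⟩
  · rw [(hS.isSCCIn_iff hne).1 hN]
    exact hcard M (by rwa [Set.compl_eq_univ_sdiff])

end Digraph

namespace CirculantTournament

open Fin.NatCast

def arc (k : ℕ) (i j : Fin (2 * k + 1)) : Prop :=
  ∃ t : ℕ, 1 ≤ t ∧ t ≤ k + 1 ∧ t ≠ k ∧ j.val = (i.val + t) % (2 * k + 1)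

def stepSet (k : ℕ) : Set (Fin (2 * k + 1)) :=
  {v | (1 ≤ v.val ∧ v.val ≤ k - 1) ∨ v.val = k + 1}

variable {k : ℕ}

lemma arc_of_val_eq {i j : Fin (2 * k + 1)} {t : ℕ} (h1 : 1 ≤ t) (h2 : t ≤ k + 1) (h3 : t ≠ k)
    (h : j.val = i.val + t ∨ j.val + (2 * k + 1) = i.val + t) : arc k i j := by
  refine ⟨t, h1, h2, h3, ?_⟩
  rcases h with h | h
  · rw [← h, Nat.mod_eq_of_lt j.isLt]
  · rw [← h, Nat.add_mod_right, Nat.mod_eq_of_lt j.isLt]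

lemma arc_add (u : Fin (2 * k + 1)) {t : ℕ} (h1 : 1 ≤ t) (h2 : t ≤ k + 1) (h3 : t ≠ k) :
    arc k u (u + t) :=
  ⟨t, h1, h2, h3, by rw [Fin.val_add, Fin.val_natCast, Nat.add_mod_mod]⟩

lemma mem_stepSet_of_arc_zero (hk : 1 ≤ k) {w : Fin (2 * k + 1)} (h : arc k 0 w) :
    w ∈ stepSet k := by
  obtain ⟨t, h1, h2, h3, hw⟩ := h
  have ht : t < 2 * k + 1 := by omega
  rw [Fin.val_zero, zero_add, Nat.mod_eq_of_lt ht] at hw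
  change (1 ≤ w.val ∧ w.val ≤ k - 1) ∨ w.val = k + 1
  omega

lemma ncard_stepSet (hk : 1 ≤ k) : (stepSet k).ncard = k := by
  have h : stepSet k = Fin.val ⁻¹' insert (k + 1) (Set.Icc 1 (k - 1)) := by
    ext v
    simp only [stepSet, Set.mem_ofPred_eq, Set.mem_preimage, Set.mem_insert_iff, Set.mem_Icc]
    tauto
  rw [h, Set.ncard_preimage_of_injective_subset_range Fin.val_injective, Set.ncard_insert_of_notMem,
    Set.ncard_Icc_nat]
  · omega
  · simp only [Set.mem_Icc]
    omega
  · rw [Fin.range_val]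
    intro a ha
    simp only [Set.mem_insert_iff, Set.mem_Icc] at ha
    simp only [Set.mem_Iio]
    omega

lemma strongIn_stepSet (hk : 3 ≤ k) : StrongIn (arc k) (stepSet k) := by
  let c : Fin (2 * k + 1) := ⟨1, by omega⟩
  let p : Fin (2 * k + 1) := ⟨k + 1, by omega⟩
  have hc : c ∈ stepSet k := Or.inl ⟨le_rfl, show 1 ≤ k - 1 by omega⟩
  have hp : p ∈ stepSet k := Or.inr rfl
  have hpc : ReachIn (arc k) (stepSet k) p c :=
    .single ⟨hp, hc, arc_of_val_eq (t := k + 1) (by omega) le_rfl (by omega)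
      (Or.inr (by simp [c, p]; omega))⟩
  have hmid : ∀ u : Fin (2 * k + 1), 2 ≤ u.val → u.val ≤ k - 1 →
      ReachIn (arc k) (stepSet k) c u ∧ ReachIn (arc k) (stepSet k) u p := by
    intro u h2 hk1
    have hu : u ∈ stepSet k := Or.inl ⟨by omega, hk1⟩
    exact ⟨.single ⟨hc, hu, arc_of_val_eq (t := u.val - 1) (by omega) (by omega) (by omega)
        (Or.inl (by simp [c]; omega))⟩,
      .single ⟨hu, hp, arc_of_val_eq (t := k + 1 - u.val) (by omega) (by omega) (by omega)
        (Or.inl (by simp [p]; omega))⟩⟩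
  refine strongIn_of_hub c fun u hu => ?_
  rcases hu with ⟨h1, hk1⟩ | h
  · rcases h1.eq_or_lt with h1 | h1
    · obtain rfl : u = c := Fin.ext h1.symm
      exact ⟨.refl, .refl⟩
    · obtain ⟨hcu, hup⟩ := hmid u h1 hk1
      exact ⟨hup.trans hpc, hcu⟩
  · obtain rfl : u = p := Fin.ext h
    obtain ⟨hc2, h2p⟩ := hmid ⟨2, by omega⟩ le_rfl (by simp; omega)
    exact ⟨hpc, hc2.trans h2p⟩

lemma inDominating_stepSet (hk : 3 ≤ k) : InDominating (arc k) (stepSet k) := by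
  intro v hv
  have arc_to : ∀ (a t : ℕ) (ha : a < 2 * k + 1), (1 ≤ a ∧ a ≤ k - 1) ∨ a = k + 1 →
      1 ≤ t → t ≤ k + 1 → t ≠ k → a = v.val + t ∨ a + (2 * k + 1) = v.val + t →
      ∃ w ∈ stepSet k, arc k v w :=
    fun a t ha haS h1 h2 h3 h => ⟨⟨a, ha⟩, haS, arc_of_val_eq h1 h2 h3 h⟩
  change ¬((1 ≤ v.val ∧ v.val ≤ k - 1) ∨ v.val = k + 1) at hv
  rcases (by omega : v.val = 0 ∨ v.val = k ∨ (k + 2 ≤ v.val ∧ v.val < 2 * k) ∨ v.val = 2 * k)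
    with h | h | h | h
  · exact arc_to 1 1 (by omega) (by omega) le_rfl (by omega) (by omega) (by omega)
  · exact arc_to (k + 1) 1 (by omega) (by omega) le_rfl (by omega) (by omega) (by omega)
  · exact arc_to (v.val - k) (k + 1) (by omega) (by omega) (by omega) le_rfl (by omega) (by omega)
  · exact arc_to 1 2 (by omega) (by omega) (by omega) (by omega) (by omega) (by omega)

lemma ncard_le_of_isSCCIn_compl (hk : 1 ≤ k) {M : Set (Fin (2 * k + 1))}
    (hM : IsSCCIn (arc k) (stepSet k)ᶜ M) : M.ncard ≤ (stepSet k).ncard := by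
  have h0S : (0 : Fin (2 * k + 1)) ∉ stepSet k := by
    change ¬((1 ≤ 0 ∧ 0 ≤ k - 1) ∨ 0 = k + 1)
    omega
  by_cases h0 : (0 : Fin (2 * k + 1)) ∈ M
  · rw [hM.eq_singleton_of_sink h0 fun w hw h => hw (mem_stepSet_of_arc_zero hk h),
      Set.ncard_singleton, ncard_stepSet hk]
    exact hk
  · calc M.ncard ≤ ((stepSet k)ᶜ \ {0}).ncard :=
          Set.ncard_le_ncard fun u hu => ⟨hM.subset hu, fun h => h0 (h ▸ hu)⟩
      _ = (stepSet k).ncard := by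
          rw [Set.ncard_sdiff_singleton_of_mem h0S, Set.ncard_compl, Nat.card_eq_fintype_card,
            Fintype.card_fin, ncard_stepSet hk]
          omega

lemma add_notMem_of_forall_add_mem {X : Set (Fin (2 * k + 1))} (hX : X.ncard < k)
    {u : Fin (2 * k + 1)} (hall : ∀ t : ℕ, 1 ≤ t → t ≤ k - 1 → u + t ∈ X) {j : ℕ} (hj : k ≤ j)
    (hj' : j ≤ 2 * k) : u + j ∉ X := by
  intro hjX
  set T : Set ℕ := insert j (Set.Icc 1 (k - 1))
  have hT : ∀ t ∈ T, t < 2 * k + 1 := by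
    rintro t (rfl | ⟨-, ht⟩) <;> omega
  have hsub : (fun t : ℕ => u + t) '' T ⊆ X := by
    rintro _ ⟨t, rfl | ⟨h1, h2⟩, rfl⟩
    exacts [hjX, hall t h1 h2]
  have hinj : Set.InjOn (fun t : ℕ => u + t) T := by
    intro a ha b hb hab
    have := congrArg Fin.val (add_left_cancel hab)
    rwa [Fin.val_cast_of_lt (hT a ha), Fin.val_cast_of_lt (hT b hb)] at this
  have hcard := Set.ncard_le_ncard hsub
  rw [hinj.ncard_image, Set.ncard_insert_of_notMem (by simp only [Set.mem_Icc]; omega),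
    Set.ncard_Icc_nat] at hcard
  omega

lemma reachIn_add {X : Set (Fin (2 * k + 1))} (hX : X.ncard < k) {d : ℕ} (hd : d ≤ 2 * k)
    {u : Fin (2 * k + 1)} (hu : u ∉ X) (hv : u + d ∉ X) : ReachIn (arc k) Xᶜ u (u + d) := by
  induction d using Nat.strong_induction_on generalizing u with
  | _ d ih =>
  have shift : ∀ (v : Fin (2 * k + 1)) (s t : ℕ), v + s + t = v + (s + t : ℕ) := by
    intros; rw [Nat.cast_add, add_assoc]
  have reach_from : ∀ s t : ℕ, s + t = d → t < d → u + s ∉ X →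
      ReachIn (arc k) Xᶜ (u + s) (u + d) :=
    fun s t hst htd hs => by
      rw [← hst, ← shift] at hv ⊢
      exact ih t htd (by omega) hs hv
  rcases Nat.eq_zero_or_pos d with rfl | hd0
  · rw [Nat.cast_zero, add_zero]
    exact .refl
  by_cases hstep : d ≤ k + 1 ∧ d ≠ k
  · exact .single ⟨hu, hv, arc_add u hd0 hstep.1 hstep.2⟩
  by_cases hfree : ∃ t : ℕ, 1 ≤ t ∧ t ≤ k - 1 ∧ u + t ∉ X
  · obtain ⟨t, h1, h2, ht⟩ := hfree
    exact .head ⟨hu, ht, arc_add u h1 (by omega) (by omega)⟩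
      (reach_from t (d - t) (by omega) (by omega) ht)
  push Not at hfree
  have hout : ∀ j, k ≤ j → j ≤ 2 * k → u + j ∉ X := fun j hj hj' =>
    add_notMem_of_forall_add_mem hX hfree hj hj'
  have hfirst := hout (k + 1) (by omega) (by omega)
  refine .head ⟨hu, hfirst, arc_add u (by omega) le_rfl (by omega)⟩ ?_
  rcases (by omega : k + 2 ≤ d ∨ d = k) with hd2 | hdk
  · exact reach_from (k + 1) (d - (k + 1)) (by omega) (by omega) hfirst
  · -- `u + k` is entered only from `u + 2k`
    have hlast := hout (2 * k) (by omega) le_rfl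
    have e : u + (2 * k : ℕ) + (k + 1 : ℕ) = u + d := by
      rw [shift, show 2 * k + (k + 1) = d + (2 * k + 1) by omega, Nat.cast_add, Fin.natCast_self,
        add_zero]
    have hmid : ReachIn (arc k) Xᶜ (u + (k + 1 : ℕ)) (u + (2 * k : ℕ)) := by
      have e' : k + 1 + (k - 1) = 2 * k := by omega
      have := ih (k - 1) (by omega) (by omega) hfirst (by rwa [shift, e'])
      rwa [shift, e'] at this
    exact hmid.tail ⟨hlast, hv, e ▸ arc_add _ (by omega) le_rfl (by omega)⟩

lemma kStrong_arc (k : ℕ) : KStrong (arc k) k := by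
  refine ⟨by rw [Fintype.card_fin]; omega, fun X hX u hu v hv => ?_⟩
  have e : u + ((v - u).val : ℕ) = v := by rw [Fin.cast_val_eq_self, add_sub_cancel]
  have hd : (v - u).val ≤ 2 * k := Nat.lt_succ_iff.mp (v - u).isLt
  have := reachIn_add hX hd hu (by rwa [e])
  rwa [e] at this

end CirculantTournament

open CirculantTournament

theorem stmt12 (k : ℕ) (hk : 3 ≤ k) :
    let A : Fin (2 * k + 1) → Fin (2 * k + 1) → Prop := fun i j =>
      ∃ t : ℕ, 1 ≤ t ∧ t ≤ k + 1 ∧ t ≠ k ∧ j.val = (i.val + t) % (2 * k + 1)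
    let S : Set (Fin (2 * k + 1)) := {v | (1 ≤ v.val ∧ v.val ≤ k - 1) ∨ v.val = k + 1}
    KStrong A k ∧ StrongSafeSet A S ∧ S.ncard = k := by
  intro A S
  have hk1 : 1 ≤ k := by omega
  have hne : (stepSet k).Nonempty := ⟨⟨1, by omega⟩, Or.inl ⟨le_rfl, show 1 ≤ k - 1 by omega⟩⟩
  exact ⟨kStrong_arc k, strongSafeSet_of_inDominating hne (strongIn_stepSet hk)
    (inDominating_stepSet hk) (fun _ hM => ncard_le_of_isSCCIn_compl hk1 hM), ncard_stepSet hk1⟩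
end

section
/- For k' ≥ 1, the rotational (regular) tournament T on vertices v_0,…,v_{2k'} with arcs v_i → v_{i+j} (indices mod 2k'+1) for j ∈ {1,…,k'} has strong connectivity exactly k', and every vertex cut set of T of cardinality k' consists of k' vertices whose indices form a consecutive sequence modulo 2k'+1. -/
variable {V : Type*}

/-!
In the circulant digraph on `Fin n` with arcs `i → i + 1, …, i + k`, a vertex set `S` induces a
strongly connected digraph as soon as every vertex of `S` has an out-neighbour in `S`: from `u`,
keep stepping forward inside `S` by at most `k`, and once `v` is at forward distance at most `k`
jump to it directly. Every out-neighbourhood has exactly `k` vertices, so deleting fewer than `k`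
vertices leaves each vertex an out-neighbour, while deleting `k` vertices disconnects only if they
form a whole out-neighbourhood `{w + 1, …, w + k}`. Deleting the out-neighbourhood of a vertex
isolates it, so no digraph is more strongly connected than its minimum out-degree.
-/

theorem KStrong.le_outDeg [Fintype V] {A : V → V → Prop} {m : ℕ} (h : KStrong A m) (v : V) :
    m ≤ outDeg A v := by
  by_contra! hlt
  -- `v` is kept out of `X` so that it survives the deletion even if `A v v`.
  obtain ⟨X, hXdef⟩ : ∃ X, X = {w | A v w} \ {v} := ⟨_, rfl⟩
  have hX : X.ncard < m := hXdef ▸ (Set.ncard_sdiff_singleton_le _ _).trans_lt hlt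
  have hv : v ∈ Xᶜ := by simp [hXdef]
  obtain ⟨u, hu, huv⟩ : ∃ u ∈ Xᶜ, u ≠ v := by
    have hsum := Set.ncard_add_ncard_compl X
    rw [Nat.card_eq_fintype_card] at hsum
    have hcard := h.1
    exact Set.exists_ne_of_one_lt_ncard (by omega) v
  have stuck : ∀ w, ReachIn A Xᶜ v w → w = v := by
    intro w hw
    induction hw with
    | refl => rfl
    | tail _ hbc ih =>
      obtain ⟨-, hc, hbc⟩ := hbc
      subst ih
      by_contra hne
      exact hc (hXdef ▸ ⟨hbc, hne⟩)
  exact huv (stuck u (h.2 X hX v hv u hu))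

def circulant (n k : ℕ) : Fin n → Fin n → Prop := fun i j =>
  ∃ t : ℕ, 1 ≤ t ∧ t ≤ k ∧ j.val = (i.val + t) % n

namespace circulant

variable {n k : ℕ}

theorem outDeg_eq (hkn : k < n) (v : Fin n) : outDeg (circulant n k) v = k := by
  have : NeZero n := ⟨by omega⟩
  have himage : {w | circulant n k v w} = (fun t => Fin.ofNat n (v.val + t)) '' Set.Icc 1 k := by
    ext w
    simp only [circulant, Set.mem_ofPred_eq, Set.mem_image, Set.mem_Icc, Fin.ext_iff,
      Fin.val_ofNat]
    exact ⟨fun ⟨t, ht1, htk, hw⟩ => ⟨t, ⟨ht1, htk⟩, hw.symm⟩,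
      fun ⟨t, ⟨ht1, htk⟩, hw⟩ => ⟨t, ht1, htk, hw.symm⟩⟩
  have hinj : Set.InjOn (fun t => Fin.ofNat n (v.val + t)) (Set.Icc 1 k) := by
    intro t ht t' ht' htt'
    have hval : (v.val + t) % n = (v.val + t') % n := by simpa [Fin.ext_iff] using htt'
    have hmod : t % n = t' % n := Nat.ModEq.add_left_cancel' v.val hval
    rwa [Nat.mod_eq_of_lt (by grind), Nat.mod_eq_of_lt (by grind)] at hmod
  rw [outDeg, himage, hinj.ncard_image, Set.ncard_eq_toFinset_card', Set.toFinset_Icc,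
    Nat.card_Icc]
  omega

variable {S : Set (Fin n)}

theorem reachIn_of_forall_exists (hS : ∀ w ∈ S, ∃ w' ∈ S, circulant n k w w') (d : ℕ) :
    ∀ u ∈ S, ∀ v ∈ S, v.val = (u.val + d) % n → ReachIn (circulant n k) S u v := by
  induction d using Nat.strong_induction_on with
  | _ d ih =>
    intro u hu v hv hd
    rcases Nat.eq_zero_or_pos d with rfl | hd0
    · obtain rfl : v = u := Fin.ext (by rw [hd, add_zero, Nat.mod_eq_of_lt u.isLt])
      exact .refl
    by_cases hdk : d ≤ k
    · exact .single ⟨hu, hv, d, hd0, hdk, hd⟩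
    obtain ⟨w, hw, t, ht1, htk, hwt⟩ := hS u hu
    have hwv : v.val = (w.val + (d - t)) % n := by
      rw [hwt, Nat.mod_add_mod, hd]
      congr 1
      omega
    exact .head ⟨hu, hw, t, ht1, htk, hwt⟩ (ih (d - t) (by omega) w hw v hv hwv)

theorem strongIn_of_forall_exists (hS : ∀ w ∈ S, ∃ w' ∈ S, circulant n k w w') :
    StrongIn (circulant n k) S := by
  intro u hu v hv
  -- `v.val + n - u.val` is the forward distance from `u` to `v`, up to a multiple of `n`.
  refine reachIn_of_forall_exists hS (v.val + n - u.val) u hu v hv ?_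
  rw [show u.val + (v.val + n - u.val) = v.val + n by omega, Nat.add_mod_right,
    Nat.mod_eq_of_lt v.isLt]

theorem kStrong (hkn : k < n) : KStrong (circulant n k) k := by
  refine ⟨by simpa using hkn, fun X hX => strongIn_of_forall_exists fun w _ => ?_⟩
  by_contra! hw
  have hsub : {w' | circulant n k w w'} ⊆ X := fun w' hw' => by_contra fun h => hw w' h hw'
  have := Set.ncard_le_ncard hsub X.toFinite
  rw [← outDeg, outDeg_eq hkn] at this
  omega

theorem not_kStrong_succ (hkn : k < n) : ¬ KStrong (circulant n k) (k + 1) := fun h => by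
  have := h.le_outDeg ⟨0, by omega⟩
  rw [outDeg_eq hkn] at this
  omega

theorem exists_eq_interval_of_not_strongIn_compl (hkn : k < n) {X : Set (Fin n)}
    (hX : X.ncard = k) (hns : ¬ StrongIn (circulant n k) Xᶜ) :
    ∃ a : ℕ, X = {v | ∃ t : ℕ, t < k ∧ v.val = (a + t) % n} := by
  obtain ⟨w, -, hw⟩ : ∃ w ∈ Xᶜ, ∀ w' ∈ Xᶜ, ¬ circulant n k w w' := by
    by_contra! h
    exact hns (strongIn_of_forall_exists h)
  have hsub : {w' | circulant n k w w'} ⊆ X := fun w' hw' => by_contra fun h => hw w' h hw'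
  have heq : {w' | circulant n k w w'} = X :=
    Set.eq_of_subset_of_ncard_le hsub (by rw [hX, ← outDeg, outDeg_eq hkn]) X.toFinite
  refine ⟨w.val + 1, heq.symm.trans (Set.ext fun v => ⟨?_, ?_⟩)⟩
  · rintro ⟨t, ht1, htk, hv⟩
    exact ⟨t - 1, by omega, by rwa [show w.val + 1 + (t - 1) = w.val + t by omega]⟩
  · rintro ⟨t, htk, hv⟩
    exact ⟨t + 1, by omega, by omega, by rwa [← add_assoc, add_right_comm]⟩

end circulant

theorem stmt13_general (k : ℕ) :
    let A : Fin (2 * k + 1) → Fin (2 * k + 1) → Prop := fun i j =>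
      ∃ t : ℕ, 1 ≤ t ∧ t ≤ k ∧ j.val = (i.val + t) % (2 * k + 1)
    KStrong A k ∧ ¬ KStrong A (k + 1) ∧
      ∀ X : Set (Fin (2 * k + 1)), X.ncard = k → ¬ StrongIn A Xᶜ →
        ∃ a : ℕ, X = {v | ∃ t : ℕ, t < k ∧ v.val = (a + t) % (2 * k + 1)} := by
  have hkn : k < 2 * k + 1 := by omega
  exact ⟨circulant.kStrong hkn, circulant.not_kStrong_succ hkn,
    fun _ => circulant.exists_eq_interval_of_not_strongIn_compl hkn⟩

theorem stmt13 (k : ℕ) (hk : 1 ≤ k) :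
    let A : Fin (2 * k + 1) → Fin (2 * k + 1) → Prop := fun i j =>
      ∃ t : ℕ, 1 ≤ t ∧ t ≤ k ∧ j.val = (i.val + t) % (2 * k + 1)
    KStrong A k ∧ ¬ KStrong A (k + 1) ∧
      ∀ X : Set (Fin (2 * k + 1)), X.ncard = k → ¬ StrongIn A Xᶜ →
        ∃ a : ℕ, X = {v | ∃ t : ℕ, t < k ∧ v.val = (a + t) % (2 * k + 1)} :=
  stmt13_general k
end

section
/- The degree bound ⌊n/2⌋ for strong connectivity is tight: for every k ≥ 0 there is a digraph D* on n = 4k+2 vertices with δ⁺(D*) = δ⁻(D*) = 2k = ⌊n/2⌋ − 1 that is not strongly connected, namely the digraph obtained from two disjoint complete symmetric digraphs D_1, D_2 each on 2k+1 vertices by adding all arcs from V(D_1) to V(D_2). -/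
variable {V : Type*}

/-- Two complete symmetric digraphs on `2k+1` vertices with all arcs added from
the first to the second. -/
def twoCliqueDigraph (k : ℕ) :
    (Fin (2 * k + 1) ⊕ Fin (2 * k + 1)) → (Fin (2 * k + 1) ⊕ Fin (2 * k + 1)) → Prop :=
  fun a b =>
    match a, b with
    | Sum.inl u, Sum.inl v => u ≠ v
    | Sum.inr u, Sum.inr v => u ≠ v
    | Sum.inl _, Sum.inr _ => True
    | Sum.inr _, Sum.inl _ => False

/-!
No arc leaves the second clique, so its vertices cannot reach the first one. Every vertex of the
second clique has out-degree exactly `2k` (its clique-mates), every vertex of the first at least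
`2k + 1`; swapping the two cliques while reversing all arcs is a symmetry of the digraph, which
turns these into the corresponding in-degree statements.
-/

theorem ncard_setOf_ne {α : Type*} [Finite α] (u : α) :
    {v : α | v ≠ u}.ncard = Nat.card α - 1 := by
  rw [← Set.compl_singleton_eq, Set.ncard_compl, Set.ncard_singleton]

theorem ReachIn.mem_of_forall_arc_mem {A : V → V → Prop} {S T : Set V}
    (hT : ∀ u w, u ∈ T → A u w → w ∈ T) {u v : V} (h : ReachIn A S u v) (hu : u ∈ T) :
    v ∈ T := by
  induction h with
  | refl => exact hu
  | tail _ hstep ih => exact hT _ _ ih hstep.2.2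

theorem not_strongIn_univ_of_forall_arc_mem {A : V → V → Prop} {T : Set V}
    (hT : ∀ u w, u ∈ T → A u w → w ∈ T) {u v : V} (hu : u ∈ T) (hv : v ∉ T) :
    ¬ StrongIn A Set.univ :=
  fun h => hv ((h u trivial v trivial).mem_of_forall_arc_mem hT hu)

theorem inDeg_eq_outDeg_of_antiAut {A : V → V → Prop} (e : V ≃ V)
    (he : ∀ a b, A (e a) (e b) ↔ A b a) (v : V) : inDeg A v = outDeg A (e v) := by
  have hpre : {w | A w v} = e ⁻¹' {x | A (e v) x} := by
    ext w; exact (he v w).symm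
  rw [inDeg, outDeg, hpre, Set.ncard_preimage_of_injective_subset_range e.injective
    (by simp [e.surjective.range_eq])]

namespace twoCliqueDigraph

variable {k : ℕ}

theorem swap_iff (a b : Fin (2 * k + 1) ⊕ Fin (2 * k + 1)) :
    twoCliqueDigraph k a.swap b.swap ↔ twoCliqueDigraph k b a := by
  cases a <;> cases b <;> simp [twoCliqueDigraph, eq_comm]

theorem inDeg_eq_outDeg_swap (v : Fin (2 * k + 1) ⊕ Fin (2 * k + 1)) :
    inDeg (twoCliqueDigraph k) v = outDeg (twoCliqueDigraph k) v.swap :=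
  inDeg_eq_outDeg_of_antiAut (Equiv.sumComm _ _) swap_iff v

theorem outDeg_inr (u : Fin (2 * k + 1)) : outDeg (twoCliqueDigraph k) (Sum.inr u) = 2 * k := by
  have hnbhd : {w | twoCliqueDigraph k (Sum.inr u) w} = Sum.inr '' {v | v ≠ u} := by
    ext (w | w) <;> simp [twoCliqueDigraph, eq_comm]
  rw [outDeg, hnbhd, Set.ncard_image_of_injective _ Sum.inr_injective, ncard_setOf_ne,
    Nat.card_eq_fintype_card, Fintype.card_fin, Nat.add_sub_cancel]

theorem two_mul_add_one_le_outDeg_inl (u : Fin (2 * k + 1)) :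
    2 * k + 1 ≤ outDeg (twoCliqueDigraph k) (Sum.inl u) := by
  have hsub : Set.range Sum.inr ⊆ {w | twoCliqueDigraph k (Sum.inl u) w} := by
    rintro _ ⟨v, rfl⟩
    trivial
  calc 2 * k + 1 = (Set.range (Sum.inr : _ → Fin (2 * k + 1) ⊕ _)).ncard := by
        rw [Set.ncard_range_of_injective Sum.inr_injective, Nat.card_eq_fintype_card,
          Fintype.card_fin]
    _ ≤ _ := Set.ncard_le_ncard hsub

theorem two_mul_le_outDeg (v : Fin (2 * k + 1) ⊕ Fin (2 * k + 1)) :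
    2 * k ≤ outDeg (twoCliqueDigraph k) v := by
  rcases v with u | u
  · exact (Nat.le_succ _).trans (two_mul_add_one_le_outDeg_inl u)
  · exact (outDeg_inr u).ge

theorem two_mul_le_inDeg (v : Fin (2 * k + 1) ⊕ Fin (2 * k + 1)) :
    2 * k ≤ inDeg (twoCliqueDigraph k) v :=
  inDeg_eq_outDeg_swap v ▸ two_mul_le_outDeg v.swap

theorem inDeg_inl (u : Fin (2 * k + 1)) : inDeg (twoCliqueDigraph k) (Sum.inl u) = 2 * k :=
  (inDeg_eq_outDeg_swap _).trans (outDeg_inr u)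

theorem not_strongIn_univ : ¬ StrongIn (twoCliqueDigraph k) Set.univ := by
  have hclosed :
      ∀ a b, a ∈ Set.range Sum.inr → twoCliqueDigraph k a b → b ∈ Set.range Sum.inr := by
    rintro _ (b | b) ⟨a, rfl⟩ hab
    · exact hab.elim
    · exact ⟨b, rfl⟩
  exact not_strongIn_univ_of_forall_arc_mem hclosed (u := Sum.inr 0) (v := Sum.inl 0) ⟨0, rfl⟩
    (by simp)

end twoCliqueDigraph

open twoCliqueDigraph in
theorem stmt17 (k : ℕ) :
    Fintype.card (Fin (2 * k + 1) ⊕ Fin (2 * k + 1)) = 4 * k + 2 ∧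
      (∀ v, 2 * k ≤ outDeg (twoCliqueDigraph k) v ∧ 2 * k ≤ inDeg (twoCliqueDigraph k) v) ∧
      (∃ v, outDeg (twoCliqueDigraph k) v = 2 * k) ∧
      (∃ v, inDeg (twoCliqueDigraph k) v = 2 * k) ∧
      2 * k = (4 * k + 2) / 2 - 1 ∧
      ¬ StrongIn (twoCliqueDigraph k) Set.univ := by
  refine ⟨?_, fun v => ⟨two_mul_le_outDeg v, two_mul_le_inDeg v⟩, ⟨Sum.inr 0, outDeg_inr 0⟩,
    ⟨Sum.inl 0, inDeg_inl 0⟩, by omega, not_strongIn_univ⟩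
  rw [Fintype.card_sum, Fintype.card_fin]
  ring
end

section
/- Let T be a tournament and let T′ be obtained from T by adding a new vertex x and all arcs from V(T) to x. Then for every k, T′ has a safe set of size at most k+1 if and only if T has a feedback vertex set of size at most k. -/
variable {V : Type*}

/-- The tournament `T'` obtained from `T` by adding a new vertex `x` together with
all arcs from `V(T)` to `x`. -/
def addSink (A : V → V → Prop) : (V ⊕ Unit) → (V ⊕ Unit) → Prop :=
  fun a b =>
    match a, b with
    | Sum.inl u, Sum.inl v => A u v
    | Sum.inl _, Sum.inr _ => True
    | _, _ => False

section helpers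

lemma reach_from_sink {A : V → V → Prop} {S : Set (V ⊕ Unit)} {u : V ⊕ Unit}
    (h : ReachIn (addSink A) S (Sum.inr ()) u) : u = Sum.inr () := by
  rcases (Relation.ReflTransGen.cases_head h) with h | ⟨c, ⟨_, _, harc⟩, _⟩
  · exact h.symm
  · exact absurd harc (by cases c <;> simp [addSink])

lemma scc_sink {A : V → V → Prop} {S : Set (V ⊕ Unit)} (hx : Sum.inr () ∈ S) :
    IsSCCIn (addSink A) S {Sum.inr ()} := by
  refine ⟨Sum.inr (), hx, ?_⟩
  ext u
  simp only [Set.mem_singleton_iff, Set.mem_setOf_eq]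
  constructor
  · rintro rfl; exact ⟨hx, .refl, .refl⟩
  · rintro ⟨_, _, h⟩; exact reach_from_sink h

lemma reach_map {A : V → V → Prop} {W : Set V} {u v : V}
    (h : ReachIn A W u v) :
    ReachIn (addSink A) (Sum.inl '' W) (Sum.inl u) (Sum.inl v) := by
  induction h with
  | refl => exact .refl
  | tail _ hstep ih =>
    exact ih.tail ⟨⟨_, hstep.1, rfl⟩, ⟨_, hstep.2.1, rfl⟩, hstep.2.2⟩

lemma reach_unmap {A : V → V → Prop} {W : Set V} {u : V} {b : V ⊕ Unit}
    (h : ReachIn (addSink A) (Sum.inl '' W) (Sum.inl u) b) :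
    ∃ v : V, b = Sum.inl v ∧ ReachIn A W u v := by
  induction h with
  | refl => exact ⟨u, rfl, .refl⟩
  | tail _ hstep ih =>
    obtain ⟨v, rfl, hv⟩ := ih
    obtain ⟨⟨v', hv', hv'eq⟩, ⟨c', hc', hc'eq⟩, harc⟩ := hstep
    cases hv'eq
    subst hc'eq
    exact ⟨c', rfl, hv.tail ⟨hv', hc', harc⟩⟩

lemma safe_mem_sink {A : V → V → Prop} {S : Set (V ⊕ Unit)}
    (hS : SafeSet (addSink A) S) : Sum.inr () ∈ S := by
  by_contra hx
  obtain ⟨-, -, h3, -⟩ := hS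
  have hMscc : IsSCCIn (addSink A) (Set.univ \ S) {Sum.inr ()} := by
    refine ⟨Sum.inr (), ⟨trivial, hx⟩, ?_⟩
    ext u
    simp only [Set.mem_singleton_iff, Set.mem_setOf_eq]
    constructor
    · rintro rfl; exact ⟨⟨trivial, hx⟩, .refl, .refl⟩
    · rintro ⟨_, _, h⟩; exact reach_from_sink h
  obtain ⟨N, -, u, hu, w, hw, harc⟩ := h3 _ hMscc
  rw [Set.mem_singleton_iff] at hu
  subst hu
  cases w <;> exact harc

end helpers

theorem stmt18 [Fintype V] (A : V → V → Prop) (hT : IsTournament A) (k : ℕ) :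
    (∃ S : Set (V ⊕ Unit), SafeSet (addSink A) S ∧ S.ncard ≤ k + 1) ↔
      (∃ X : Set V, AcyclicIn A Xᶜ ∧ X.ncard ≤ k) := by
  constructor
  · rintro ⟨S, hS, hcard⟩
    have hx : Sum.inr () ∈ S := safe_mem_sink hS
    set X : Set V := {v | Sum.inl v ∈ S} with hXdef
    have hSeq : S = Sum.inl '' X ∪ {Sum.inr ()} := by
      ext a
      cases a with
      | inl v => simp [hXdef]
      | inr u => cases u; simp [hx]
    have hcomp : Set.univ \ S = Sum.inl '' Xᶜ := by
      ext a
      cases a with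
      | inl v => simp [hXdef]
      | inr u => cases u; simp [hx]
    refine ⟨X, ?_, ?_⟩
    · intro u hu v hv harc hreach
      have huv : u ≠ v := fun h => (hT.1 u) (h ▸ harc)
      -- the SCC of `Sum.inl u` in the complement of S
      set M : Set (V ⊕ Unit) := {a | a ∈ Set.univ \ S ∧
        ReachIn (addSink A) (Set.univ \ S) a (Sum.inl u) ∧
        ReachIn (addSink A) (Set.univ \ S) (Sum.inl u) a} with hMdef
      have huS : Sum.inl u ∈ Set.univ \ S := by rw [hcomp]; exact ⟨u, hu, rfl⟩
      have hvS : Sum.inl v ∈ Set.univ \ S := by rw [hcomp]; exact ⟨v, hv, rfl⟩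
      have hMscc : IsSCCIn (addSink A) (Set.univ \ S) M := ⟨Sum.inl u, huS, rfl⟩
      have hreach_uv : ReachIn (addSink A) (Set.univ \ S) (Sum.inl u) (Sum.inl v) := by
        rw [hcomp]
        exact Relation.ReflTransGen.single ⟨⟨u, hu, rfl⟩, ⟨v, hv, rfl⟩, harc⟩
      have hreach_vu : ReachIn (addSink A) (Set.univ \ S) (Sum.inl v) (Sum.inl u) := by
        rw [hcomp]; exact reach_map hreach
      have huM : Sum.inl u ∈ M := ⟨huS, .refl, .refl⟩
      have hvM : Sum.inl v ∈ M := ⟨hvS, hreach_vu, hreach_uv⟩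
      have hpair : {Sum.inl u, Sum.inl v} ⊆ M := by
        rintro a (rfl | rfl)
        · exact huM
        · exact hvM
      have h2 : 2 ≤ M.ncard := by
        have := Set.ncard_le_ncard hpair M.toFinite
        rwa [Set.ncard_pair (by simpa using huv)] at this
      have hle : M.ncard ≤ ({Sum.inr ()} : Set (V ⊕ Unit)).ncard := by
        refine hS.2.2.2 M _ hMscc (scc_sink hx) ⟨Sum.inl u, huM, Sum.inr (), rfl, trivial⟩
      rw [Set.ncard_singleton] at hle
      omega
    · have hXcard : X.ncard + 1 = S.ncard := by
        rw [hSeq, Set.ncard_union_eq (by simp) ((X.toFinite.image _)) (Set.finite_singleton _),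
          Set.ncard_image_of_injective _ Sum.inl_injective, Set.ncard_singleton]
      omega
  · rintro ⟨X, hX, hcard⟩
    set S : Set (V ⊕ Unit) := Sum.inl '' X ∪ {Sum.inr ()} with hSdef
    have hx : Sum.inr () ∈ S := by simp [hSdef]
    have hcomp : Set.univ \ S = Sum.inl '' Xᶜ := by
      ext a
      cases a with
      | inl v => simp [hSdef]
      | inr u => cases u; simp [hSdef]
    -- every SCC of the complement is a singleton
    have hsingleton : ∀ M, IsSCCIn (addSink A) (Set.univ \ S) M →
        ∃ z, M = {Sum.inl z} ∧ z ∈ Xᶜ := by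
      rintro M ⟨a, ha, rfl⟩
      rw [hcomp] at ha ⊢
      obtain ⟨w, hw, rfl⟩ := ha
      refine ⟨w, ?_, hw⟩
      ext b
      simp only [Set.mem_singleton_iff, Set.mem_setOf_eq]
      constructor
      · rintro ⟨hb, hbw, hwb⟩
        obtain ⟨z, hz, rfl⟩ := hb
        obtain ⟨z', hz', hzw⟩ := reach_unmap hbw
        obtain ⟨z'', hz'', hwz⟩ := reach_unmap hwb
        rw [Sum.inl.injEq] at hz' hz''
        subst hz'
        subst hz''
        by_contra hne
        rcases Relation.ReflTransGen.cases_head hzw with h | ⟨t, ⟨hzX, htX, harc⟩, htw⟩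
        · exact hne (congrArg Sum.inl h)
        · exact hX z hzX t htX harc (htw.trans hwz)
      · rintro rfl
        exact ⟨⟨w, hw, rfl⟩, .refl, .refl⟩
    refine ⟨S, ⟨⟨_, hx⟩, Set.subset_univ _, ?_, ?_⟩, ?_⟩
    · intro M hM
      obtain ⟨z, rfl, hz⟩ := hsingleton M hM
      exact ⟨{Sum.inr ()}, scc_sink hx, Sum.inl z, rfl, Sum.inr (), rfl, trivial⟩
    · intro M N hM hN _
      obtain ⟨z, rfl, -⟩ := hsingleton M hM
      obtain ⟨b, hb, rfl⟩ := hN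
      have hNne : ({u | u ∈ S ∧ ReachIn (addSink A) S u b ∧
          ReachIn (addSink A) S b u} : Set (V ⊕ Unit)).Nonempty := ⟨b, hb, .refl, .refl⟩
      rw [Set.ncard_singleton]
      exact (Set.ncard_pos (Set.toFinite _)).mpr hNne
    · have : S.ncard = X.ncard + 1 := by
        rw [hSdef, Set.ncard_union_eq (by simp) ((X.toFinite.image _)) (Set.finite_singleton _),
          Set.ncard_image_of_injective _ Sum.inl_injective, Set.ncard_singleton]
      omega
end

section
/- In any digraph D, if S* is a safe set of the subdigraph induced by the union of strong components C_{i+1},…,C_p (in an ordering where all arcs between distinct strong components C_a, C_b with a < b go from C_a to C_b), W ⊆ V(C_i) is such that no strong component of C_i − W has an arc into a strictly smaller strong component of D[W], and every strong component of C_i − W has size at most the minimum size of a strong component of D[S*], then W ∪ S* is a safe set of the subdigraph induced by C_i ∪ C_{i+1} ∪ ⋯ ∪ C_p, provided this subdigraph is semicomplete. -/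
variable {V : Type*}

lemma reachIn_mono {A : V → V → Prop} {P Q : Set V} (h : P ⊆ Q) {u v : V}
    (hr : ReachIn A P u v) : ReachIn A Q u v := by
  induction hr with
  | refl => exact Relation.ReflTransGen.refl
  | tail _ hbc ih => exact ih.tail ⟨h hbc.1, h hbc.2.1, hbc.2.2⟩

lemma reachIn_closed {A : V → V → Prop} {P Q : Set V} (hQP : Q ⊆ P)
    (hcl : ∀ a ∈ Q, ∀ b ∈ P, A a b → b ∈ Q) {u v : V}
    (hr : ReachIn A P u v) (hu : u ∈ Q) : v ∈ Q ∧ ReachIn A Q u v := by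
  induction hr with
  | refl => exact ⟨hu, Relation.ReflTransGen.refl⟩
  | tail _ hbc ih =>
    obtain ⟨hb, hub⟩ := ih
    have hc := hcl _ hb _ hbc.2.1 hbc.2.2
    exact ⟨hc, hub.tail ⟨hb, hc, hbc.2.2⟩⟩

lemma reachIn_coclosed {A : V → V → Prop} {P Q : Set V}
    (hcl : ∀ a ∈ Q, ∀ b ∈ P, A a b → b ∈ Q) {u v : V}
    (hr : ReachIn A P u v) : v ∉ Q → u ∉ Q ∧ ReachIn A (P \ Q) u v := by
  induction hr with
  | refl => exact fun hv => ⟨hv, Relation.ReflTransGen.refl⟩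
  | tail _ hbc ih =>
    intro hv
    have hb := fun hb => hv (hcl _ hb _ hbc.2.1 hbc.2.2)
    obtain ⟨hu, hub⟩ := ih hb
    exact ⟨hu, hub.tail ⟨⟨hbc.1, hb⟩, ⟨hbc.2.1, hv⟩, hbc.2.2⟩⟩

lemma classIn_eq_closed {A : V → V → Prop} {P Q : Set V} (hQP : Q ⊆ P)
    (hcl : ∀ a ∈ Q, ∀ b ∈ P, A a b → b ∈ Q) {v : V} (hv : v ∈ Q) :
    {u | u ∈ P ∧ ReachIn A P u v ∧ ReachIn A P v u}
      = {u | u ∈ Q ∧ ReachIn A Q u v ∧ ReachIn A Q v u} := by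
  ext u
  constructor
  · rintro ⟨hu, huv, hvu⟩
    obtain ⟨huQ, hvu'⟩ := reachIn_closed hQP hcl hvu hv
    obtain ⟨-, huv'⟩ := reachIn_closed hQP hcl huv huQ
    exact ⟨huQ, huv', hvu'⟩
  · rintro ⟨hu, huv, hvu⟩
    exact ⟨hQP hu, reachIn_mono hQP huv, reachIn_mono hQP hvu⟩

lemma classIn_eq_coclosed {A : V → V → Prop} {P Q : Set V}
    (hcl : ∀ a ∈ Q, ∀ b ∈ P, A a b → b ∈ Q) {v : V} (hv : v ∉ Q) :
    {u | u ∈ P ∧ ReachIn A P u v ∧ ReachIn A P v u}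
      = {u | u ∈ P \ Q ∧ ReachIn A (P \ Q) u v ∧ ReachIn A (P \ Q) v u} := by
  ext u
  constructor
  · rintro ⟨hu, huv, hvu⟩
    obtain ⟨huQ, huv'⟩ := reachIn_coclosed hcl huv hv
    obtain ⟨-, hvu'⟩ := reachIn_coclosed hcl hvu huQ
    exact ⟨⟨hu, huQ⟩, huv', hvu'⟩
  · rintro ⟨hu, huv, hvu⟩
    exact ⟨hu.1, reachIn_mono Set.diff_subset huv, reachIn_mono Set.diff_subset hvu⟩

lemma sccIn_up {A : V → V → Prop} {P Q M : Set V} (hQP : Q ⊆ P)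
    (hcl : ∀ a ∈ Q, ∀ b ∈ P, A a b → b ∈ Q)
    (hM : IsSCCIn A Q M) : IsSCCIn A P M := by
  obtain ⟨v, hv, rfl⟩ := hM
  exact ⟨v, hQP hv, (classIn_eq_closed hQP hcl hv).symm⟩

lemma sccIn_decomp {A : V → V → Prop} {P Q M : Set V} (hQP : Q ⊆ P)
    (hcl : ∀ a ∈ Q, ∀ b ∈ P, A a b → b ∈ Q)
    (hM : IsSCCIn A P M) : IsSCCIn A Q M ∨ IsSCCIn A (P \ Q) M := by
  obtain ⟨v, hv, rfl⟩ := hM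
  by_cases hvQ : v ∈ Q
  · exact Or.inl ⟨v, hvQ, classIn_eq_closed hQP hcl hvQ⟩
  · exact Or.inr ⟨v, ⟨hv, hvQ⟩, classIn_eq_coclosed hcl hvQ⟩

lemma sccIn_subset {A : V → V → Prop} {P M : Set V} (hM : IsSCCIn A P M) : M ⊆ P := by
  obtain ⟨v, hv, rfl⟩ := hM
  exact fun u hu => hu.1

lemma sccIn_nonempty {A : V → V → Prop} {P M : Set V} (hM : IsSCCIn A P M) : M.Nonempty := by
  obtain ⟨v, hv, rfl⟩ := hM
  exact ⟨v, hv, Relation.ReflTransGen.refl, Relation.ReflTransGen.refl⟩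

lemma classIn_rep {A : V → V → Prop} {P : Set V} {v x : V}
    (hx : x ∈ {u | u ∈ P ∧ ReachIn A P u v ∧ ReachIn A P v u}) :
    {u | u ∈ P ∧ ReachIn A P u v ∧ ReachIn A P v u}
      = {u | u ∈ P ∧ ReachIn A P u x ∧ ReachIn A P x u} := by
  obtain ⟨hxP, hxv, hvx⟩ := hx
  ext u
  exact ⟨fun ⟨h1, h2, h3⟩ => ⟨h1, h2.trans hvx, hxv.trans h3⟩,
         fun ⟨h1, h2, h3⟩ => ⟨h1, h2.trans hxv, hvx.trans h3⟩⟩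

theorem stmt19 [Fintype V] (A : V → V → Prop) (p : ℕ) (C : Fin p → Set V)
    (hSCC : ∀ a : Fin p, IsSCCIn A Set.univ (C a))
    (hcover : ∀ v : V, ∃ a : Fin p, v ∈ C a)
    (horder : ∀ a b : Fin p, a < b → ∀ u ∈ C a, ∀ v ∈ C b, ¬ A v u)
    (i : Fin p)
    (hsemi : ∀ u ∈ C i ∪ ⋃ a ∈ {b : Fin p | i < b}, C a,
        ∀ v ∈ C i ∪ ⋃ a ∈ {b : Fin p | i < b}, C a, u ≠ v → A u v ∨ A v u)
    (S : Set V) (hS : SafeSetIn A (⋃ a ∈ {b : Fin p | i < b}, C a) S)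
    (W : Set V) (hW : W ⊆ C i)
    (hno : ∀ M N : Set V, IsSCCIn A (C i \ W) M → IsSCCIn A W N →
        HasArc A M N → M.ncard ≤ N.ncard)
    (hsize : ∀ M : Set V, IsSCCIn A (C i \ W) M →
        ∀ N : Set V, IsSCCIn A S N → M.ncard ≤ N.ncard) :
    SafeSetIn A (C i ∪ ⋃ a ∈ {b : Fin p | i < b}, C a) (W ∪ S) := by
  set T : Set V := ⋃ a ∈ {b : Fin p | i < b}, C a with hTdef
  have hTm : ∀ v : V, v ∈ T ↔ ∃ a : Fin p, i < a ∧ v ∈ C a := by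
    intro v
    rw [hTdef]
    simp [Set.mem_iUnion]
  obtain ⟨Sne, hST, hS3, hS4⟩ := hS
  have F2 : ∀ v ∈ T, ∀ u ∈ C i, ¬ A v u := by
    intro v hv u hu
    obtain ⟨a, hia, hva⟩ := (hTm v).1 hv
    exact horder i a hia u hu v hva
  have F1 : ∀ u ∈ C i, ∀ v ∈ T, u ≠ v → A u v := by
    intro u hu v hv hne
    rcases hsemi u (Set.mem_union_left _ hu) v (Set.mem_union_right _ hv) hne with h | h
    · exact h
    · exact absurd h (F2 v hv u hu)
  by_cases hx : ∃ x, x ∈ C i ∧ x ∈ T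
  · obtain ⟨x, hxC, hxT⟩ := hx
    obtain ⟨a, hia, hxa⟩ := (hTm x).1 hxT
    have hCiCa : C i = C a := by
      obtain ⟨vi, -, hCi⟩ := hSCC i
      obtain ⟨va, -, hCa⟩ := hSCC a
      calc C i = _ := hCi
        _ = {u | u ∈ Set.univ ∧ ReachIn A Set.univ u x ∧ ReachIn A Set.univ x u} :=
            classIn_rep (hCi ▸ hxC)
        _ = _ := (classIn_rep (hCa ▸ hxa)).symm
        _ = C a := hCa.symm
    have hsing : ∀ y ∈ C i, y = x := by
      intro y hy
      by_contra hne
      exact horder i a hia x hxC y (hCiCa ▸ hy) (F1 y hy x hxT hne)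
    have hCiT : C i ⊆ T := fun y hy => (hsing y hy) ▸ hxT
    have hH : C i ∪ T = T := Set.union_eq_right.mpr hCiT
    by_cases hxW : x ∈ W
    · have hWx : W = {x} :=
        Set.eq_singleton_iff_unique_mem.mpr ⟨hxW, fun y hy => hsing y (hW hy)⟩
      by_cases hxS : x ∈ S
      · have hRS : W ∪ S = S := by
          rw [hWx]
          exact Set.union_eq_right.mpr (Set.singleton_subset_iff.mpr hxS)
        rw [hH, hRS]
        exact ⟨Sne, hST, hS3, hS4⟩
      · have hRx : W ∪ S = insert x S := by rw [hWx, Set.singleton_union]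
        rw [hH, hRx]
        have noInX : ∀ v ∈ T, ¬ A v x := fun v hv => F2 v hv x hxC
        have hclS : ∀ a' ∈ S, ∀ b ∈ insert x S, A a' b → b ∈ S := by
          intro a' ha' b hb hab
          rcases hb with rfl | hb
          · exact absurd hab (noInX a' (hST ha'))
          · exact hb
        have hset : T \ insert x S = (T \ S) \ {x} := by
          ext z
          simp only [Set.mem_diff, Set.mem_insert_iff, Set.mem_singleton_iff]
          tauto
        have hclQd : ∀ a' ∈ (T \ S) \ {x}, ∀ b ∈ T \ S, A a' b → b ∈ (T \ S) \ {x} := by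
          intro a' ha' b hb hab
          refine ⟨hb, fun hbx => ?_⟩
          rw [Set.mem_singleton_iff] at hbx
          exact noInX a' ha'.1.1 (hbx ▸ hab)
        refine ⟨⟨x, Set.mem_insert x S⟩, Set.insert_subset hxT hST, ?_, ?_⟩
        · intro M hM
          rw [hset] at hM
          have hM' : IsSCCIn A (T \ S) M := sccIn_up Set.diff_subset hclQd hM
          obtain ⟨N, hN, harc⟩ := hS3 M hM'
          exact ⟨N, sccIn_up (Set.subset_insert x S) hclS hN, harc⟩
        · intro M N hM hN harc
          rw [hset] at hM
          have hM' : IsSCCIn A (T \ S) M := sccIn_up Set.diff_subset hclQd hM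
          rcases sccIn_decomp (Set.subset_insert x S) hclS hN with hNS | hNx
          · exact hS4 M N hM' hNS harc
          · exfalso
            have hNsub : N ⊆ insert x S \ S := sccIn_subset hNx
            obtain ⟨u, hu, w, hwN, hA⟩ := harc
            have hwx : w = x := by
              rcases (hNsub hwN).1 with h | h
              · exact h
              · exact absurd h (hNsub hwN).2
            exact noInX u (sccIn_subset hM' hu).1 (hwx ▸ hA)
    · have hWe : W = ∅ := by
        ext y
        simp only [Set.mem_empty_iff_false, iff_false]
        intro hy
        exact hxW ((hsing y (hW hy)) ▸ hy)
      rw [hH, hWe, Set.empty_union]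
      exact ⟨Sne, hST, hS3, hS4⟩
  · have hdisj : ∀ v ∈ C i, v ∉ T := fun v hv hvT => hx ⟨v, hv, hvT⟩
    have hclT : ∀ a' ∈ T \ S, ∀ b ∈ (C i ∪ T) \ (W ∪ S), A a' b → b ∈ T \ S := by
      intro a' ha' b hb hab
      have hbT : b ∈ T := by
        rcases hb.1 with hbC | hbT
        · exact absurd hab (F2 a' ha'.1 b hbC)
        · exact hbT
      exact ⟨hbT, fun hbS => hb.2 (Or.inr hbS)⟩
    have hQsub : T \ S ⊆ (C i ∪ T) \ (W ∪ S) := by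
      intro z hz
      refine ⟨Or.inr hz.1, ?_⟩
      rintro (hw | hs)
      · exact hdisj z (hW hw) hz.1
      · exact hz.2 hs
    have hPdiff : ((C i ∪ T) \ (W ∪ S)) \ (T \ S) = C i \ W := by
      ext z
      constructor
      · rintro ⟨⟨hzH, hzR⟩, hzQ⟩
        have hzS : z ∉ S := fun h => hzR (Or.inr h)
        have hzT : z ∉ T := fun h => hzQ ⟨h, hzS⟩
        rcases hzH with h | h
        · exact ⟨h, fun hw => hzR (Or.inl hw)⟩
        · exact absurd h hzT
      · rintro ⟨hzC, hzW⟩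
        have hzT : z ∉ T := hdisj z hzC
        have hzS : z ∉ S := fun h => hzT (hST h)
        exact ⟨⟨Or.inl hzC, fun h => h.elim hzW hzS⟩, fun h => hzT h.1⟩
    have hclS : ∀ a' ∈ S, ∀ b ∈ W ∪ S, A a' b → b ∈ S := by
      intro a' ha' b hb hab
      rcases hb with hw | hs
      · exact absurd hab (F2 a' (hST ha') b (hW hw))
      · exact hs
    have hRdiff : (W ∪ S) \ S = W := by
      ext z
      constructor
      · rintro ⟨hz, hzS⟩
        rcases hz with h | h
        · exact h
        · exact absurd h hzS
      · intro hz
        exact ⟨Or.inl hz, fun hs => hdisj z (hW hz) (hST hs)⟩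
    have decompM : ∀ M, IsSCCIn A ((C i ∪ T) \ (W ∪ S)) M →
        IsSCCIn A (T \ S) M ∨ IsSCCIn A (C i \ W) M := by
      intro M hM
      rcases sccIn_decomp hQsub hclT hM with h | h
      · exact Or.inl h
      · rw [hPdiff] at h
        exact Or.inr h
    have decompN : ∀ N, IsSCCIn A (W ∪ S) N → IsSCCIn A S N ∨ IsSCCIn A W N := by
      intro N hN
      rcases sccIn_decomp Set.subset_union_right hclS hN with h | h
      · exact Or.inl h
      · rw [hRdiff] at h
        exact Or.inr h
    refine ⟨Sne.mono Set.subset_union_right,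
      Set.union_subset (hW.trans Set.subset_union_left) (hST.trans Set.subset_union_right),
      ?_, ?_⟩
    · intro M hM
      rcases decompM M hM with h | h
      · obtain ⟨N, hN, harc⟩ := hS3 M h
        exact ⟨N, sccIn_up Set.subset_union_right hclS hN, harc⟩
      · obtain ⟨u, hu⟩ := sccIn_nonempty h
        have huC : u ∈ C i \ W := sccIn_subset h hu
        obtain ⟨s, hs⟩ := Sne
        refine ⟨{w | w ∈ S ∧ ReachIn A S w s ∧ ReachIn A S s w}, ?_, ?_⟩
        · exact sccIn_up Set.subset_union_right hclS ⟨s, hs, rfl⟩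
        · refine ⟨u, hu, s, ⟨hs, Relation.ReflTransGen.refl, Relation.ReflTransGen.refl⟩, ?_⟩
          exact F1 u huC.1 s (hST hs) (fun he => hdisj u huC.1 (he ▸ hST hs))
    · intro M N hM hN harc
      rcases decompM M hM with hM1 | hM2
      · rcases decompN N hN with hN1 | hN2
        · exact hS4 M N hM1 hN1 harc
        · exfalso
          obtain ⟨u, hu, w, hw, hA⟩ := harc
          exact F2 u (sccIn_subset hM1 hu).1 w (hW (sccIn_subset hN2 hw)) hA
      · rcases decompN N hN with hN1 | hN2
        · exact hsize M hM2 N hN1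
        · exact hno M N hM2 hN2 harc
end
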